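/- Let f : [-1,1] → [-1,1] satisfy f(x) = ∑_{k≥0} d_k x^k with d_k ≥ 0 for all k, the series converging on [-1,1], and f(1) = 1. Then for any n ≥ 1 there exists a map C from the unit sphere S^{n-1} ⊂ R^n into the unit sphere of a real Hilbert space H such that ⟨C(a), C(b)⟩ = f(⟨a,b⟩) for all unit vectors a, b ∈ S^{n-1}. -/

import Mathlib

open Real Set

/-! The kernel `f(⟨a,b⟩) = ∑ d_k ⟨a,b⟩^k` is realized by the feature map
`v ↦ (√d_k · v^{⊗k})_k` into `ℓ²(⊕_k (ℝⁿ)^{⊗k})`, because `⟨a^{⊗k}, b^{⊗k}⟩ = ⟨a,b⟩^k`.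
On the unit sphere the feature vector has squared norm `∑ d_k = f 1 = 1`. -/

noncomputable section

variable {ι : Type*} [Fintype ι]

/-- `v^{⊗k}`, with `(ℝ^ι)^{⊗k}` realized as `ℝ^(Fin k → ι)`. -/
def tensorPower (k : ℕ) (v : EuclideanSpace ℝ ι) : EuclideanSpace ℝ (Fin k → ι) :=
  WithLp.toLp 2 fun i => ∏ j, v (i j)

theorem inner_tensorPower (k : ℕ) (v w : EuclideanSpace ℝ ι) :
    inner ℝ (tensorPower k v) (tensorPower k w) = inner ℝ v w ^ k := by
  classical
  simp only [PiLp.inner_apply, RCLike.inner_apply, conj_trivial, tensorPower]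
  rw [← Fin.prod_const, Finset.prod_univ_sum, Fintype.piFinset_univ]
  exact Finset.sum_congr rfl fun p _ => (Finset.prod_mul_distrib).symm

def featureMap (d : ℕ → ℝ) (v : EuclideanSpace ℝ ι) (k : ℕ) : EuclideanSpace ℝ (Fin k → ι) :=
  √(d k) • tensorPower k v

theorem inner_featureMap {d : ℕ → ℝ} {k : ℕ} (hd : 0 ≤ d k) (v w : EuclideanSpace ℝ ι) :
    inner ℝ (featureMap d v k) (featureMap d w k) = d k * inner ℝ v w ^ k := by
  rw [featureMap, featureMap, real_inner_smul_left, real_inner_smul_right, inner_tensorPower,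
    ← mul_assoc, mul_self_sqrt hd]

theorem memℓp_featureMap {d : ℕ → ℝ} (hd : ∀ k, 0 ≤ d k) {v : EuclideanSpace ℝ ι}
    (hs : Summable fun k => d k * (‖v‖ ^ 2) ^ k) : Memℓp (featureMap d v) 2 := by
  refine memℓp_gen (hs.congr fun k => ?_)
  rw [ENNReal.toReal_ofNat, rpow_two, ← real_inner_self_eq_norm_sq (featureMap d v k),
    inner_featureMap (hd k), real_inner_self_eq_norm_sq]

open Classical in
/-- The feature map as an element of `ℓ²`; it is `0` where the feature vector is not square
summable. -/
def featureMapLp (d : ℕ → ℝ) (v : EuclideanSpace ℝ ι) :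
    lp (fun k => EuclideanSpace ℝ (Fin k → ι)) 2 :=
  if h : Memℓp (featureMap d v) 2 then ⟨featureMap d v, h⟩ else 0

theorem coe_featureMapLp {d : ℕ → ℝ} {v : EuclideanSpace ℝ ι} (h : Memℓp (featureMap d v) 2) :
    ⇑(featureMapLp d v) = featureMap d v := by
  rw [featureMapLp, dif_pos h]

theorem hasSum_inner_featureMapLp {d : ℕ → ℝ} (hd : ∀ k, 0 ≤ d k) {a b : EuclideanSpace ℝ ι}
    (ha : Memℓp (featureMap d a) 2) (hb : Memℓp (featureMap d b) 2) :
    HasSum (fun k => d k * inner ℝ a b ^ k) (inner ℝ (featureMapLp d a) (featureMapLp d b)) := by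
  simpa only [coe_featureMapLp ha, coe_featureMapLp hb, inner_featureMap (hd _)] using
    lp.hasSum_inner (𝕜 := ℝ) (featureMapLp d a) (featureMapLp d b)

end

theorem stmt_10 (f : ℝ → ℝ) (d : ℕ → ℝ)
    (hd : ∀ k, 0 ≤ d k)
    (hsum : ∀ x ∈ Icc (-1 : ℝ) 1, HasSum (fun k : ℕ => d k * x ^ k) (f x))
    (hf1 : f 1 = 1)
    (n : ℕ) :
    ∃ (H : Type) (_ : NormedAddCommGroup H) (_ : InnerProductSpace ℝ H)
      (_ : CompleteSpace H) (C : EuclideanSpace ℝ (Fin n) → H),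
      ∀ a b : EuclideanSpace ℝ (Fin n), ‖a‖ = 1 → ‖b‖ = 1 →
        ‖C a‖ = 1 ∧ (inner ℝ (C a) (C b) : ℝ) = f (inner ℝ a b) := by
  have hmem : ∀ v : EuclideanSpace ℝ (Fin n), ‖v‖ = 1 → Memℓp (featureMap d v) 2 := by
    intro v hv
    refine memℓp_featureMap hd ?_
    simpa [hv] using (hsum 1 (by norm_num)).summable
  have hinner : ∀ a b : EuclideanSpace ℝ (Fin n), ‖a‖ = 1 → ‖b‖ = 1 →
      inner ℝ (featureMapLp d a) (featureMapLp d b) = f (inner ℝ a b) := fun a b ha hb =>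
    (hasSum_inner_featureMapLp hd (hmem a ha) (hmem b hb)).unique
      (hsum _ (real_inner_mem_Icc_of_norm_eq_one ha hb))
  refine ⟨_, inferInstance, inferInstance, inferInstance, featureMapLp d,
    fun a b ha hb => ⟨?_, hinner a b ha hb⟩⟩
  rw [norm_eq_sqrt_real_inner, hinner a a ha ha, real_inner_self_eq_norm_sq, ha, one_pow, hf1,
    sqrt_one]
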